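/- In the nongeometric frog model setup, the conditional covariance of I_{t+1} and Z_{t+1} given F_t equals (A_t·I_t/N)·(1 − 1/N)^{A_t}·(I_t − N)/(N − 1); consequently Var(A_{t+1}|F_t) = Var(I_{t+1}|F_t) + Var(D_{t+1}|F_t) + (2A_t·I_t/N)·(1 − 1/N)^{A_t}·(N − I_t)/(N − 1). -/

import Mathlib

open Finset

/-- The number of empty boxes when the balls land according to `ω : Fin b → Fin c`. -/
def emptyCount {b c : ℕ} (ω : Fin b → Fin c) : ℕ :=
  (Finset.univ.filter (fun j : Fin c => ∀ i : Fin b, ω i ≠ j)).card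

/-- Binomial weight: `P(Binomial(n,q) = k)`. -/
noncomputable def binomW (n : ℕ) (q : ℝ) (k : ℕ) : ℝ :=
  (n.choose k : ℝ) * q ^ k * (1 - q) ^ (n - k)

/-- Conditional expectation of `f(Z_{t+1}, I_{t+1})` in the nongeometric frog model:
`Z ~ Binomial(A, I/N)`, then `I_{t+1} ~ EmpBox(Z, I)`. -/
noncomputable def ngE (N I A : ℕ) (f : ℕ → ℕ → ℝ) : ℝ :=
  ∑ z ∈ Finset.range (A + 1), binomW A ((I : ℝ) / (N : ℝ)) z *
    ((∑ ω : Fin z → Fin I, f z (emptyCount ω)) / (I : ℝ) ^ z)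

lemma sum_binom (x y : ℝ) (n : ℕ) :
    ∑ z ∈ range (n+1), (n.choose z : ℝ) * x ^ z * y ^ (n - z) = (x + y) ^ n := by
  rw [add_pow]
  exact Finset.sum_congr rfl fun z _ => by ring

lemma sum_binom_mul (x y : ℝ) (n : ℕ) (hn : 1 ≤ n) :
    ∑ z ∈ range (n+1), (n.choose z : ℝ) * z * x ^ z * y ^ (n - z)
      = n * x * (x + y) ^ (n - 1) := by
  obtain ⟨m, rfl⟩ : ∃ m, n = m + 1 := ⟨n - 1, (Nat.succ_pred_eq_of_pos hn).symm⟩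
  rw [Finset.sum_range_succ']
  simp only [Nat.cast_zero, mul_zero, zero_mul, pow_zero, one_mul, add_zero,
    Nat.add_sub_cancel]
  push_cast
  have key : ∀ k, ((m+1).choose (k+1) : ℝ) * (k+1) = (m+1) * (m.choose k) := by
    intro k
    have h2 : ((m+1) * m.choose k : ℕ) = ((m+1).choose (k+1) * (k+1) : ℕ) :=
      Nat.add_one_mul_choose_eq m k
    exact_mod_cast h2.symm
  calc ∑ k ∈ range (m+1), ((m+1).choose (k+1) : ℝ) * ((k:ℝ)+1) * x ^ (k+1) * y ^ (m-k)
      = ∑ k ∈ range (m+1), ((m+1) : ℝ) * x * ((m.choose k : ℝ) * x ^ k * y ^ (m-k)) := by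
        refine Finset.sum_congr rfl fun k _ => ?_
        have := key k
        push_cast at this ⊢
        rw [pow_succ]
        linear_combination (x ^ k * x * y ^ (m - k)) * this
    _ = ((m+1) : ℝ) * x * (x+y)^m := by
        rw [← Finset.mul_sum, sum_binom]
    _ = ((m:ℝ)+1) * x * (x+y)^m := by ring

lemma sum_emptyCount (I z : ℕ) :
    ∑ ω : Fin z → Fin I, emptyCount ω = I * (I - 1) ^ z := by
  unfold emptyCount
  simp only [Finset.card_filter]
  rw [Finset.sum_comm]
  have h : ∀ j : Fin I, (∑ ω : Fin z → Fin I, if ∀ i, ω i ≠ j then 1 else 0) = (I-1)^z := by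
    intro j
    rw [← Finset.card_filter]
    have he : Finset.univ.filter (fun ω : Fin z → Fin I => ∀ i, ω i ≠ j)
        = Fintype.piFinset (fun _ : Fin z => Finset.univ.erase j) := by
      ext ω; simp
    rw [he, Fintype.card_piFinset]
    simp [Finset.card_erase_of_mem]
  rw [Finset.sum_congr rfl (fun j _ => h j)]
  simp [Finset.card_univ, mul_comm]

lemma sum_emptyCount' (I z : ℕ) (hI : 1 ≤ I) :
    ∑ ω : Fin z → Fin I, (emptyCount ω : ℝ) = (I:ℝ) * ((I:ℝ) - 1) ^ z := by
  have h : ((∑ ω : Fin z → Fin I, emptyCount ω : ℕ) : ℝ) = ((I * (I-1)^z : ℕ) : ℝ) :=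
    congrArg _ (sum_emptyCount I z)
  rw [Nat.cast_sum] at h
  rw [h]
  push_cast [Nat.cast_sub hI]
  ring

lemma ngE_poly (N I A : ℕ) (c0 c1 c2 c3 c4 c5 : ℝ) :
    ngE N I A (fun z i => c0 + c1 * (z:ℝ) + c2 * (i:ℝ) + c3 * (z:ℝ)^2 + c4 * (i:ℝ)^2
        + c5 * ((z:ℝ) * (i:ℝ)))
      = c0 * ngE N I A (fun _ _ => 1) + c1 * ngE N I A (fun z _ => (z:ℝ))
        + c2 * ngE N I A (fun _ i => (i:ℝ)) + c3 * ngE N I A (fun z _ => (z:ℝ)^2)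
        + c4 * ngE N I A (fun _ i => (i:ℝ)^2) + c5 * ngE N I A (fun z i => (z:ℝ) * (i:ℝ)) := by
  unfold ngE
  simp only [Finset.mul_sum, ← Finset.sum_add_distrib]
  refine Finset.sum_congr rfl fun z _ => ?_
  simp only [Finset.sum_add_distrib, Finset.sum_const, Finset.card_univ, nsmul_eq_mul,
    ← Finset.mul_sum]
  ring

lemma ngE_one (N I A : ℕ) (hI : 1 ≤ I) :
    ngE N I A (fun _ _ => 1) = 1 := by
  have hI0 : (I:ℝ) ≠ 0 := Nat.cast_ne_zero.mpr (by omega)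
  unfold ngE binomW
  have : ∀ z ∈ range (A+1), (A.choose z : ℝ) * ((I:ℝ)/N) ^ z * (1 - (I:ℝ)/N) ^ (A - z) *
      ((∑ _ω : Fin z → Fin I, (1:ℝ)) / (I:ℝ) ^ z)
      = (A.choose z : ℝ) * ((I:ℝ)/N) ^ z * (1 - (I:ℝ)/N) ^ (A - z) := by
    intro z _
    rw [Finset.sum_const, Finset.card_univ]
    simp [Fintype.card_fun, mul_comm]
    field_simp
  rw [Finset.sum_congr rfl this, sum_binom]
  simp

lemma ngE_z (N I A : ℕ) (hI : 1 ≤ I) (hA : 1 ≤ A) :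
    ngE N I A (fun z _ => (z:ℝ)) = (A:ℝ) * (I:ℝ) / (N:ℝ) := by
  have hI0 : (I:ℝ) ≠ 0 := Nat.cast_ne_zero.mpr (by omega)
  unfold ngE binomW
  have : ∀ z ∈ range (A+1), (A.choose z : ℝ) * ((I:ℝ)/N) ^ z * (1 - (I:ℝ)/N) ^ (A - z) *
      ((∑ _ω : Fin z → Fin I, (z:ℝ)) / (I:ℝ) ^ z)
      = (A.choose z : ℝ) * (z:ℝ) * ((I:ℝ)/N) ^ z * (1 - (I:ℝ)/N) ^ (A - z) := by
    intro z _
    rw [Finset.sum_const, Finset.card_univ]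
    simp [Fintype.card_fun]
    field_simp
  rw [Finset.sum_congr rfl this, sum_binom_mul _ _ _ hA]
  simp
  ring

lemma ngE_i (N I A : ℕ) (hI : 1 ≤ I) (hN : 1 ≤ N) :
    ngE N I A (fun _ i => (i:ℝ)) = (I:ℝ) * (1 - 1/(N:ℝ)) ^ A := by
  have hI0 : (I:ℝ) ≠ 0 := Nat.cast_ne_zero.mpr (by omega)
  have hN0 : (N:ℝ) ≠ 0 := Nat.cast_ne_zero.mpr (by omega)
  unfold ngE binomW
  have : ∀ z ∈ range (A+1), (A.choose z : ℝ) * ((I:ℝ)/N) ^ z * (1 - (I:ℝ)/N) ^ (A - z) *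
      ((∑ ω : Fin z → Fin I, (emptyCount ω : ℝ)) / (I:ℝ) ^ z)
      = (I:ℝ) * ((A.choose z : ℝ) * (((I:ℝ)-1)/N) ^ z * (1 - (I:ℝ)/N) ^ (A - z)) := by
    intro z _
    rw [sum_emptyCount' I z hI]
    rw [div_pow, div_pow]
    field_simp
  rw [Finset.sum_congr rfl this, ← Finset.mul_sum, sum_binom]
  have : ((I:ℝ)-1)/N + (1 - (I:ℝ)/N) = 1 - 1/(N:ℝ) := by field_simp; ring
  rw [this]

lemma ngE_zi (N I A : ℕ) (hI : 1 ≤ I) (hN : 1 ≤ N) (hA : 1 ≤ A) :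
    ngE N I A (fun z i => (z:ℝ) * (i:ℝ))
      = (A:ℝ) * ((I:ℝ) * (((I:ℝ)-1)/N)) * (1 - 1/(N:ℝ)) ^ (A-1) := by
  have hI0 : (I:ℝ) ≠ 0 := Nat.cast_ne_zero.mpr (by omega)
  have hN0 : (N:ℝ) ≠ 0 := Nat.cast_ne_zero.mpr (by omega)
  unfold ngE binomW
  have : ∀ z ∈ range (A+1), (A.choose z : ℝ) * ((I:ℝ)/N) ^ z * (1 - (I:ℝ)/N) ^ (A - z) *
      ((∑ ω : Fin z → Fin I, (z:ℝ) * (emptyCount ω : ℝ)) / (I:ℝ) ^ z)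
      = (I:ℝ) * ((A.choose z : ℝ) * (z:ℝ) * (((I:ℝ)-1)/N) ^ z * (1 - (I:ℝ)/N) ^ (A - z)) := by
    intro z _
    rw [← Finset.mul_sum, sum_emptyCount' I z hI]
    rw [div_pow, div_pow]
    field_simp
  rw [Finset.sum_congr rfl this, ← Finset.mul_sum, sum_binom_mul _ _ _ hA]
  have h2 : ((I:ℝ)-1)/N + (1 - (I:ℝ)/N) = 1 - 1/(N:ℝ) := by field_simp; ring
  rw [h2]
  ring

/-- In the nongeometric frog model, the conditional covariance of `I_{t+1}` and
`Z_{t+1}` given `F_t` equals `(A I/N)(1 − 1/N)^A (I − N)/(N − 1)`; consequently, with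
`A_{t+1} = Z_{t+1} + I_t − I_{t+1}` and `D_{t+1} = N + 1 − Z_{t+1} − I_t`,
`Var(A_{t+1}|F_t) = Var(I_{t+1}|F_t) + Var(D_{t+1}|F_t)
  + (2 A I/N)(1 − 1/N)^A (N − I)/(N − 1)`. -/
theorem nongeom_cond_covariance (N I A : ℕ) (hN : 3 ≤ N) (hI : 1 ≤ I) (hIN : I ≤ N)
    (hA : 1 ≤ A) :
    (ngE N I A (fun z i => (i : ℝ) * (z : ℝ))
        - ngE N I A (fun _ i => (i : ℝ)) * ngE N I A (fun z _ => (z : ℝ))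
      = ((A : ℝ) * (I : ℝ) / (N : ℝ)) * (1 - 1 / (N : ℝ)) ^ A
          * (((I : ℝ) - (N : ℝ)) / ((N : ℝ) - 1))) ∧
    (ngE N I A (fun z i => ((z : ℝ) + (I : ℝ) - (i : ℝ)) ^ 2)
        - (ngE N I A (fun z i => (z : ℝ) + (I : ℝ) - (i : ℝ))) ^ 2
      = (ngE N I A (fun _ i => (i : ℝ) ^ 2)
            - (ngE N I A (fun _ i => (i : ℝ))) ^ 2)
        + (ngE N I A (fun z _ => (((N : ℝ) + 1) - (z : ℝ) - (I : ℝ)) ^ 2)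
            - (ngE N I A (fun z _ => ((N : ℝ) + 1) - (z : ℝ) - (I : ℝ))) ^ 2)
        + (2 * (A : ℝ) * (I : ℝ) / (N : ℝ)) * (1 - 1 / (N : ℝ)) ^ A
            * (((N : ℝ) - (I : ℝ)) / ((N : ℝ) - 1))) := by
  have hN1 : 1 ≤ N := by omega
  have hN0 : (N:ℝ) ≠ 0 := Nat.cast_ne_zero.mpr (by omega)
  have hNm1 : (N:ℝ) - 1 ≠ 0 := by
    have : (3:ℝ) ≤ (N:ℝ) := by exact_mod_cast hN
    linarith
  have hswap : (fun (z i : ℕ) => (i:ℝ) * (z:ℝ)) = (fun (z i : ℕ) => (z:ℝ) * (i:ℝ)) := by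
    funext z i; ring
  have hF1 : (fun (z i : ℕ) => ((z:ℝ) + (I:ℝ) - (i:ℝ)) ^ 2)
      = (fun (z i : ℕ) => ((I:ℝ)^2) + (2*(I:ℝ)) * (z:ℝ) + (-(2*(I:ℝ))) * (i:ℝ) + 1 * (z:ℝ)^2
          + 1 * (i:ℝ)^2 + (-2) * ((z:ℝ) * (i:ℝ))) := by
    funext z i; ring
  have hF2 : (fun (z i : ℕ) => (z:ℝ) + (I:ℝ) - (i:ℝ))
      = (fun (z i : ℕ) => (I:ℝ) + 1 * (z:ℝ) + (-1) * (i:ℝ) + 0 * (z:ℝ)^2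
          + 0 * (i:ℝ)^2 + 0 * ((z:ℝ) * (i:ℝ))) := by
    funext z i; ring
  have hF3 : (fun (z : ℕ) (_ : ℕ) => (((N:ℝ) + 1) - (z:ℝ) - (I:ℝ)) ^ 2)
      = (fun (z i : ℕ) => (((N:ℝ)+1-(I:ℝ))^2) + (-(2*((N:ℝ)+1-(I:ℝ)))) * (z:ℝ) + 0 * (i:ℝ)
          + 1 * (z:ℝ)^2 + 0 * (i:ℝ)^2 + 0 * ((z:ℝ) * (i:ℝ))) := by
    funext z i; ring
  have hF4 : (fun (z : ℕ) (_ : ℕ) => ((N:ℝ) + 1) - (z:ℝ) - (I:ℝ))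
      = (fun (z i : ℕ) => ((N:ℝ)+1-(I:ℝ)) + (-1) * (z:ℝ) + 0 * (i:ℝ)
          + 0 * (z:ℝ)^2 + 0 * (i:ℝ)^2 + 0 * ((z:ℝ) * (i:ℝ))) := by
    funext z i; ring
  obtain ⟨B, rfl⟩ : ∃ B, A = B + 1 := ⟨A - 1, (Nat.succ_pred_eq_of_pos hA).symm⟩
  constructor
  · rw [hswap, ngE_zi N I (B+1) hI hN1 hA, ngE_i N I (B+1) hI hN1, ngE_z N I (B+1) hI hA]
    simp only [Nat.add_sub_cancel, pow_succ]
    set s := (1 - 1/(N:ℝ)) ^ B with hs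
    push_cast
    field_simp
    ring
  · rw [hF1, hF2, hF3, hF4, ngE_poly, ngE_poly, ngE_poly, ngE_poly,
      ngE_one N I (B+1) hI, ngE_z N I (B+1) hI hA, ngE_i N I (B+1) hI hN1,
      ngE_zi N I (B+1) hI hN1 hA]
    simp only [Nat.add_sub_cancel, pow_succ]
    set EZ2 := ngE N I (B+1) (fun z _ => (z:ℝ)^2) with hEZ2
    set EI2 := ngE N I (B+1) (fun _ i => (i:ℝ)^2) with hEI2
    set s := (1 - 1/(N:ℝ)) ^ B with hs
    push_cast
    field_simp
    ring
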